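/- Let F be a finite algebra and σ a congruence on F that is abelian (TC(σ, σ; ⊥) holds) but not strongly abelian, witnessed by a term t, elements a₁ ≡_σ a₂, tuples b̄₁ ≡_σ b̄₂, and elements c₁ = t(a₁, b̄₁) ≠ t(a₁, b̄₂) = c₃ and c₂ = t(a₂, b̄₁) with t(a₂, b̄₂) = c₁ and c₁ ≠ c₂. Then for every unary polynomial p of F: p(c₁) = p(c₂) if and only if p(c₃) = p(c₁). -/

import Mathlib

/-- A purely functional first-order signature. -/
structure Signature where
  ops : Type
  arity : ops → ℕ

/-- An algebra for a signature: an interpretation of each operation symbol. -/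
structure UAlg (σ : Signature) (A : Type) where
  interp : ∀ o : σ.ops, (Fin (σ.arity o) → A) → A

/-- Terms in `n` variables over a signature. -/
inductive Term (σ : Signature) (n : ℕ) : Type
  | var : Fin n → Term σ n
  | op : (o : σ.ops) → (Fin (σ.arity o) → Term σ n) → Term σ n

/-- Evaluation of a term at a tuple. -/
def Term.eval {σ : Signature} {A : Type} (Alg : UAlg σ A) {n : ℕ} :
    Term σ n → (Fin n → A) → A
  | .var i, v => v i
  | .op o ts, v => Alg.interp o fun j => (ts j).eval Alg v

/-- A congruence: an equivalence relation compatible with all operations. -/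
def IsCongruence {σ : Signature} {A : Type} (Alg : UAlg σ A) (r : A → A → Prop) : Prop :=
  Equivalence r ∧ ∀ (o : σ.ops) (x y : Fin (σ.arity o) → A),
    (∀ i, r (x i) (y i)) → r (Alg.interp o x) (Alg.interp o y)

/-- A `k`-ary polynomial operation: a term operation with parameters. -/
def IsPolynomial {σ : Signature} {A : Type} (Alg : UAlg σ A) {k : ℕ}
    (f : (Fin k → A) → A) : Prop :=
  ∃ (n : ℕ) (t : Term σ (k + n)) (params : Fin n → A),
    ∀ x : Fin k → A, f x = t.eval Alg (Fin.append x params)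

/-- A unary polynomial operation. -/
def IsUnaryPolynomial {σ : Signature} {A : Type} (Alg : UAlg σ A) (f : A → A) : Prop :=
  IsPolynomial Alg (k := 1) fun x => f (x 0)

/-- The term condition TermCond(α, β; γ). -/
def TermCond {σ : Signature} {A : Type} (Alg : UAlg σ A) (α β γ : A → A → Prop) : Prop :=
  ∀ (n m : ℕ) (t : Term σ (n + m)) (a₁ a₂ : Fin n → A) (b₁ b₂ : Fin m → A),
    (∀ i, α (a₁ i) (a₂ i)) → (∀ i, β (b₁ i) (b₂ i)) →
    γ (t.eval Alg (Fin.append a₁ b₁)) (t.eval Alg (Fin.append a₁ b₂)) →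
    γ (t.eval Alg (Fin.append a₂ b₁)) (t.eval Alg (Fin.append a₂ b₂))

/-- β is strongly abelian over γ. -/
def StronglyAbelianOver {σ : Signature} {A : Type} (Alg : UAlg σ A)
    (β γ : A → A → Prop) : Prop :=
  ∀ (n m : ℕ) (t : Term σ (n + m)) (a₁ a₂ : Fin n → A) (b₁ b₂ b₃ : Fin m → A),
    (∀ i, β (a₁ i) (a₂ i)) → (∀ i, β (b₁ i) (b₂ i)) → (∀ i, β (b₂ i) (b₃ i)) →
    γ (t.eval Alg (Fin.append a₁ b₁)) (t.eval Alg (Fin.append a₂ b₂)) →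
    γ (t.eval Alg (Fin.append a₁ b₃)) (t.eval Alg (Fin.append a₂ b₃))

/-- The least congruence containing a binary relation. -/
def congClosure {σ : Signature} {A : Type} (Alg : UAlg σ A) (R : A → A → Prop) :
    A → A → Prop :=
  fun a b => ∀ r, IsCongruence Alg r → (∀ x y, R x y → r x y) → r a b

/-- A subset closed under the operations. -/
def IsSubalgebra {σ : Signature} {A : Type} (Alg : UAlg σ A) (s : Set A) : Prop :=
  ∀ (o : σ.ops) (x : Fin (σ.arity o) → A), (∀ j, x j ∈ s) → Alg.interp o x ∈ s

/-- The power algebra `A^I`. -/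
def UAlg.pow {σ : Signature} {A : Type} (Alg : UAlg σ A) (I : Type) :
    UAlg σ (I → A) :=
  ⟨fun o x i => Alg.interp o fun j => x j i⟩

/-- The product of a family of algebras. -/
def UAlg.pi {σ : Signature} {ι : Type} {A : ι → Type} (Alg : ∀ i, UAlg σ (A i)) :
    UAlg σ (∀ i, A i) :=
  ⟨fun o x i => (Alg i).interp o fun j => x j i⟩

/-- The binary product of two algebras. -/
def UAlg.prod2 {σ : Signature} {A B : Type} (AlgA : UAlg σ A) (AlgB : UAlg σ B) :
    UAlg σ (A × B) :=
  ⟨fun o x => (AlgA.interp o fun j => (x j).1, AlgB.interp o fun j => (x j).2)⟩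

/-- The algebra structure on a subalgebra. -/
def UAlg.sub {σ : Signature} {A : Type} (Alg : UAlg σ A) (s : Set A)
    (hs : IsSubalgebra Alg s) : UAlg σ s :=
  ⟨fun o x => ⟨Alg.interp o fun j => (x j : A), hs o _ fun j => (x j).2⟩⟩

/-- Homomorphisms of algebras. -/
def IsHom {σ : Signature} {A B : Type} (AlgA : UAlg σ A) (AlgB : UAlg σ B)
    (f : A → B) : Prop :=
  ∀ (o : σ.ops) (x : Fin (σ.arity o) → A), f (AlgA.interp o x) = AlgB.interp o (f ∘ x)

/-- An idempotent unary polynomial. -/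
def IsIdempotentPoly {σ : Signature} {A : Type} (Alg : UAlg σ A) (e : A → A) : Prop :=
  IsUnaryPolynomial Alg e ∧ ∀ x, e (e x) = e x

/-- A (⊥, δ)-minimal set. -/
def IsMinimalSet {σ : Signature} {A : Type} (Alg : UAlg σ A) (δ : A → A → Prop)
    (U : Set A) : Prop :=
  (∃ e, IsIdempotentPoly Alg e ∧ U = Set.range e ∧ ∃ a b, δ a b ∧ e a ≠ e b) ∧
  ∀ e', IsIdempotentPoly Alg e' → Set.range e' ⊆ U → (∃ a b, δ a b ∧ e' a ≠ e' b) →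
    Set.range e' = U

/-- μ is an atom of the congruence lattice. -/
def IsAtomCong {σ : Signature} {A : Type} (Alg : UAlg σ A) (μ : A → A → Prop) : Prop :=
  IsCongruence Alg μ ∧ μ ≠ (fun a b => a = b) ∧
  ∀ θ, IsCongruence Alg θ → (∀ a b, θ a b → μ a b) → θ = (fun a b => a = b) ∨ θ = μ

/-- A (⊥, μ)-trace in a minimal set U. -/
def IsTrace {A : Type} (μ : A → A → Prop) (U N : Set A) : Prop :=
  (∃ a ∈ U, N = {x ∈ U | μ x a}) ∧ ∃ x ∈ N, ∃ y ∈ N, x ≠ y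

/-- The body of a minimal set: the union of its traces. -/
def Body {A : Type} (μ : A → A → Prop) (U : Set A) : Set A :=
  {x | ∃ N, IsTrace μ U N ∧ x ∈ N}

/-- Polynomial permutations of U (as functions A → A which are bijective on U). -/
def PolPermFun {σ : Signature} {A : Type} (Alg : UAlg σ A) (U : Set A) : Set (A → A) :=
  { p | IsUnaryPolynomial Alg p ∧ Set.BijOn p U U }

/-- Subdirect irreducibility: there is a pair contained in every nontrivial congruence. -/
def IsSI {σ : Signature} {B : Type} (Alg : UAlg σ B) : Prop :=
  ∃ a b : B, a ≠ b ∧ ∀ θ, IsCongruence Alg θ → θ ≠ (fun x y => x = y) → θ a b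

/-- The subalgebra generated by a set. -/
def genSub {σ : Signature} {B : Type} (Alg : UAlg σ B) (s : Set B) : Set B :=
  ⋂₀ {t | IsSubalgebra Alg t ∧ s ⊆ t}

/-- A strongly solvable congruence: connected to ⊥ by strongly abelian covers. -/
def IsStronglySolvable {σ : Signature} {A : Type} (Alg : UAlg σ A)
    (s : A → A → Prop) : Prop :=
  ∃ (n : ℕ) (c : Fin (n + 1) → (A → A → Prop)),
    c 0 = (fun a b => a = b) ∧ c (Fin.last n) = s ∧
    (∀ i, IsCongruence Alg (c i)) ∧
    ∀ i : Fin n, (∀ a b, c i.castSucc a b → c i.succ a b) ∧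
      StronglyAbelianOver Alg (c i.succ) (c i.castSucc)

/-- The set of n-ary term operations of an algebra. -/
def TermFun {σ : Signature} {A : Type} (Alg : UAlg σ A) (n : ℕ) :
    Set ((Fin n → A) → A) :=
  { g | ∃ t : Term σ n, g = fun v => t.eval Alg v }

/-!
`p ∘ t` is again a polynomial, and the term condition passes from terms to polynomials because
the constants can be put into the `σ`-block as `σ`-reflexive pairs. Applying it to `p ∘ t` once
with the shift `a₁ → a₂` and once with `a₂ → a₁`, the identity `t(a₂, b̄₂) = c₁` turns the two
instances into the two directions of the equivalence.
-/

namespace Term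

variable {σ : Signature} {A : Type} (Alg : UAlg σ A)

def subst {k l : ℕ} : Term σ k → (Fin k → Term σ l) → Term σ l
  | .var i, f => f i
  | .op o ts, f => .op o fun j => (ts j).subst f

theorem eval_subst {k l : ℕ} (u : Term σ k) (f : Fin k → Term σ l) (v : Fin l → A) :
    (u.subst f).eval Alg v = u.eval Alg (fun i => (f i).eval Alg v) := by
  induction u with
  | var i => rfl
  | op o ts ih => simp only [subst, eval, ih]

def rename {k l : ℕ} (ρ : Fin k → Fin l) (u : Term σ k) : Term σ l :=
  u.subst fun i => .var (ρ i)

theorem eval_rename {k l : ℕ} (ρ : Fin k → Fin l) (u : Term σ k) (v : Fin l → A) :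
    (u.rename ρ).eval Alg v = u.eval Alg (v ∘ ρ) :=
  eval_subst Alg u _ v

theorem isPolynomial_eval {k : ℕ} (t : Term σ k) : IsPolynomial Alg (t.eval Alg) :=
  ⟨0, t, Fin.elim0, fun x => by simp⟩

end Term

section Polynomial

variable {σ : Signature} {A : Type} {Alg : UAlg σ A}

theorem IsPolynomial.comp_unary {k : ℕ} {f : (Fin k → A) → A} {p : A → A}
    (hp : IsUnaryPolynomial Alg p) (hf : IsPolynomial Alg f) :
    IsPolynomial Alg fun x => p (f x) := by
  obtain ⟨n, u, P, hu⟩ := hf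
  obtain ⟨n', s, Q, hs⟩ := hp
  let ρ : Fin (k + n) → Fin (k + (n + n')) := Fin.cast (Nat.add_assoc k n n') ∘ Fin.castAdd n'
  have hρ : ∀ x : Fin k → A, Fin.append x (Fin.append P Q) ∘ ρ = Fin.append x P := by
    intro x
    ext i
    exact (congrFun (Fin.append_assoc x P Q) (Fin.castAdd n' i)).symm.trans
      (Fin.append_left _ _ i)
  refine ⟨n + n', s.subst (Fin.append (fun _ => u.rename ρ)
    fun j => .var (Fin.natAdd k (Fin.natAdd n j))), Fin.append P Q,
    fun x => (hs fun _ => f x).trans ?_⟩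
  rw [Term.eval_subst, hu]
  congr 1
  ext i
  refine Fin.addCases (fun i => ?_) (fun j => ?_) i
  · simp only [Fin.append_left, Term.eval_rename, hρ]
  · simp only [Fin.append_right, Term.eval]

theorem TermCond.isPolynomial {α β γ : A → A → Prop} (hab : TermCond Alg α β γ)
    (hβ : ∀ x, β x x) {n m : ℕ} {f : (Fin (n + m) → A) → A} (hf : IsPolynomial Alg f)
    {a₁ a₂ : Fin n → A} {b₁ b₂ : Fin m → A}
    (ha : ∀ i, α (a₁ i) (a₂ i)) (hb : ∀ i, β (b₁ i) (b₂ i)) :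
    γ (f (Fin.append a₁ b₁)) (f (Fin.append a₁ b₂)) →
      γ (f (Fin.append a₂ b₁)) (f (Fin.append a₂ b₂)) := by
  obtain ⟨l, u, P, hu⟩ := hf
  have hassoc : ∀ a b, f (Fin.append a b) =
      (u.rename (Fin.cast (Nat.add_assoc n m l))).eval Alg (Fin.append a (Fin.append b P)) := by
    intro a b
    rw [hu, Term.eval_rename, Fin.append_assoc]
  simp only [hassoc]
  exact hab n (m + l) _ a₁ a₂ _ _ ha
    (Fin.addCases (by simpa using hb) (by simpa using fun _ => hβ _))

end Polynomial

theorem stmt_15_general {σs : Signature} {F : Type} (Alg : UAlg σs F)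
    (σ : F → F → Prop) (hσ : IsCongruence Alg σ)
    (hab : TermCond Alg σ σ (fun a b => a = b))
    {m : ℕ} (t : Term σs (1 + m)) (a₁ a₂ : F) (b₁ b₂ : Fin m → F)
    (ha : σ a₁ a₂) (hb : ∀ i, σ (b₁ i) (b₂ i))
    (c₁ c₂ c₃ : F)
    (hc₁ : t.eval Alg (Fin.append (fun _ : Fin 1 => a₁) b₁) = c₁)
    (hc₃ : t.eval Alg (Fin.append (fun _ : Fin 1 => a₁) b₂) = c₃)
    (hc₂ : t.eval Alg (Fin.append (fun _ : Fin 1 => a₂) b₁) = c₂)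
    (hc₁' : t.eval Alg (Fin.append (fun _ : Fin 1 => a₂) b₂) = c₁) :
    ∀ p : F → F, IsUnaryPolynomial Alg p → (p c₁ = p c₂ ↔ p c₃ = p c₁) := by
  intro p hp
  have hpt := (t.isPolynomial_eval Alg).comp_unary hp
  have tc₁₂ := hab.isPolynomial hσ.1.refl hpt (a₁ := fun _ => a₁) (a₂ := fun _ => a₂)
    (fun _ => ha) hb
  have tc₂₁ := hab.isPolynomial hσ.1.refl hpt (a₁ := fun _ => a₂) (a₂ := fun _ => a₁)
    (fun _ => hσ.1.symm ha) hb
  simp only [hc₁, hc₂, hc₃, hc₁'] at tc₁₂ tc₂₁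
  exact ⟨fun h => (tc₂₁ h.symm).symm, fun h => (tc₁₂ h.symm).symm⟩

/-- If σ is abelian (TC(σ, σ; ⊥)) and the displayed witness data show σ is
not strongly abelian, then for every unary polynomial p: p(c₁) = p(c₂) iff p(c₃) = p(c₁). -/
theorem stmt_15 {σs : Signature} {F : Type} [Fintype F] (Alg : UAlg σs F)
    (σ : F → F → Prop) (hσ : IsCongruence Alg σ)
    (hab : TermCond Alg σ σ (fun a b => a = b))
    {m : ℕ} (t : Term σs (1 + m)) (a₁ a₂ : F) (b₁ b₂ : Fin m → F)
    (ha : σ a₁ a₂) (hb : ∀ i, σ (b₁ i) (b₂ i))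
    (c₁ c₂ c₃ : F)
    (hc₁ : t.eval Alg (Fin.append (fun _ : Fin 1 => a₁) b₁) = c₁)
    (hc₃ : t.eval Alg (Fin.append (fun _ : Fin 1 => a₁) b₂) = c₃)
    (hc₂ : t.eval Alg (Fin.append (fun _ : Fin 1 => a₂) b₁) = c₂)
    (hc₁' : t.eval Alg (Fin.append (fun _ : Fin 1 => a₂) b₂) = c₁)
    (h13 : c₁ ≠ c₃) (h12 : c₁ ≠ c₂) :
    ∀ p : F → F, IsUnaryPolynomial Alg p → (p c₁ = p c₂ ↔ p c₃ = p c₁) :=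
  stmt_15_general Alg σ hσ hab t a₁ a₂ b₁ b₂ ha hb c₁ c₂ c₃ hc₁ hc₃ hc₂ hc₁'
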